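/- Let R be a polynomial ring over a field, let G_2 ⊆ G_1 be finite subsets of R, and let e ∈ ℤ_{≥0}. If G_1 ⊆ V_{G_2,e}, then V_{G_1,i} = V_{G_2,i} for all i ≥ e, and consequently max(d_{G_1}, e) = max(d_{G_2}, e). -/
import Mathlib


open MvPolynomial

noncomputable section

def Vspace {σ K : Type*} [Field K] (G : Set (MvPolynomial σ K)) (i : ℕ) :
    Submodule K (MvPolynomial σ K) :=
  sInf {W : Submodule K (MvPolynomial σ K) |
    (∀ f ∈ W, MvPolynomial.totalDegree f ≤ i) ∧
    (∀ g ∈ G, MvPolynomial.totalDegree g ≤ i → g ∈ W) ∧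
    ∀ g ∈ W, ∀ h : MvPolynomial σ K,
      MvPolynomial.totalDegree (h * g) ≤ i → h * g ∈ W}

def lastFallDegree {σ K : Type*} [Field K] (G : Set (MvPolynomial σ K)) : ℕ :=
  sSup {d : ℕ | 0 < d ∧
    Vspace G d ⊓ MvPolynomial.restrictTotalDegree σ K (d - 1) ≠ Vspace G (d - 1)}

-- Auxiliary lemmas

lemma restrict_mem_VSet {σ K : Type*} [Field K] (G : Set (MvPolynomial σ K)) (i : ℕ) :
    MvPolynomial.restrictTotalDegree σ K i ∈
      {W : Submodule K (MvPolynomial σ K) |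
        (∀ f ∈ W, MvPolynomial.totalDegree f ≤ i) ∧
        (∀ g ∈ G, MvPolynomial.totalDegree g ≤ i → g ∈ W) ∧
        ∀ g ∈ W, ∀ h : MvPolynomial σ K,
          MvPolynomial.totalDegree (h * g) ≤ i → h * g ∈ W} := by
  refine ⟨fun f hf => (mem_restrictTotalDegree _ _ _).1 hf,
    fun g _ hgi => (mem_restrictTotalDegree _ _ _).2 hgi,
    fun g _ h hhi => (mem_restrictTotalDegree _ _ _).2 hhi⟩

lemma Vspace_totalDegree_le {σ K : Type*} [Field K] {G : Set (MvPolynomial σ K)} {i : ℕ}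
    {f : MvPolynomial σ K} (hf : f ∈ Vspace G i) : f.totalDegree ≤ i := by
  have : Vspace G i ≤ MvPolynomial.restrictTotalDegree σ K i :=
    sInf_le (restrict_mem_VSet G i)
  exact (mem_restrictTotalDegree _ _ _).1 (this hf)

lemma mem_Vspace_of_mem {σ K : Type*} [Field K] {G : Set (MvPolynomial σ K)} {i : ℕ}
    {g : MvPolynomial σ K} (hg : g ∈ G) (hgi : g.totalDegree ≤ i) : g ∈ Vspace G i := by
  rw [Vspace, Submodule.mem_sInf]
  exact fun W hW => hW.2.1 g hg hgi

lemma mul_mem_Vspace {σ K : Type*} [Field K] {G : Set (MvPolynomial σ K)} {i : ℕ}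
    {g : MvPolynomial σ K} (hg : g ∈ Vspace G i) (h : MvPolynomial σ K)
    (hhi : (h * g).totalDegree ≤ i) : h * g ∈ Vspace G i := by
  rw [Vspace, Submodule.mem_sInf] at hg ⊢
  exact fun W hW => hW.2.2 g (hg W hW) h hhi

lemma Vspace_mono_set {σ K : Type*} [Field K] {G1 G2 : Set (MvPolynomial σ K)}
    (hsub : G2 ⊆ G1) (i : ℕ) : Vspace G2 i ≤ Vspace G1 i := by
  apply sInf_le_sInf
  rintro W ⟨h1, h2, h3⟩
  exact ⟨h1, fun g hg => h2 g (hsub hg), h3⟩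

lemma Vspace_mono_deg {σ K : Type*} [Field K] (G : Set (MvPolynomial σ K)) {e i : ℕ}
    (hei : e ≤ i) : Vspace G e ≤ Vspace G i := by
  have : Vspace G e ≤ Vspace G i ⊓ MvPolynomial.restrictTotalDegree σ K e := by
    apply sInf_le
    refine ⟨fun f hf => (mem_restrictTotalDegree _ _ _).1 hf.2,
      fun g hg hge => ⟨mem_Vspace_of_mem hg (hge.trans hei),
        (mem_restrictTotalDegree _ _ _).2 hge⟩,
      fun g hg h hhe => ⟨mul_mem_Vspace hg.1 h (hhe.trans hei),
        (mem_restrictTotalDegree _ _ _).2 hhe⟩⟩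
  exact this.trans inf_le_left

lemma max_sSup_eq {e : ℕ} {S1 S2 : Set ℕ} (hS : ∀ d, e < d → (d ∈ S1 ↔ d ∈ S2)) :
    max (sSup S1) e = max (sSup S2) e := by
  -- boundedness transfers
  have hbdd : ∀ {T1 T2 : Set ℕ}, (∀ d, e < d → (d ∈ T1 ↔ d ∈ T2)) →
      BddAbove T2 → BddAbove T1 := by
    rintro T1 T2 hT ⟨b, hb⟩
    refine ⟨max b e, fun d hd => ?_⟩
    rcases le_or_gt d e with h' | h'
    · exact h'.trans (le_max_right _ _)
    · exact (hb ((hT d h').1 hd)).trans (le_max_left _ _)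
  have key : ∀ {T1 T2 : Set ℕ}, (∀ d, e < d → (d ∈ T1 ↔ d ∈ T2)) →
      max (sSup T1) e ≤ max (sSup T2) e := by
    intro T1 T2 hT
    rcases em (BddAbove T1) with hb1 | hb1
    · rcases Set.eq_empty_or_nonempty T1 with he1 | hne1
      · simp [he1, csSup_empty]
      · refine max_le ?_ (le_max_right _ _)
        refine csSup_le hne1 fun d hd => ?_
        rcases le_or_gt d e with h' | h'
        · exact h'.trans (le_max_right _ _)
        · have hd2 : d ∈ T2 := (hT d h').1 hd
          have hb2 : BddAbove T2 := by
            by_contra hb2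
            exact hb2 (hbdd (fun d hd => (hT d hd).symm) hb1)
          exact (le_csSup hb2 hd2).trans (le_max_left _ _)
    · have : sSup T1 = 0 := by
        rw [csSup_of_not_bddAbove hb1, csSup_empty]; rfl
      simp [this]
  exact le_antisymm (key hS) (key fun d hd => (hS d hd).symm)

/-- **Proposition.** Let `G₂ ⊆ G₁` be finite subsets of a polynomial ring over a field
and `e ∈ ℕ`.  If `G₁ ⊆ V_{G₂,e}`, then `V_{G₁,i} = V_{G₂,i}` for all `i ≥ e`, and
consequently `max(d_{G₁}, e) = max(d_{G₂}, e)`. -/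
theorem Vspace_eq_and_lastFallDegree_eq_of_subset
    {σ K : Type} [Field K]
    (G1 G2 : Set (MvPolynomial σ K)) (hG1 : G1.Finite) (hG2 : G2.Finite)
    (hsub : G2 ⊆ G1) (e : ℕ)
    (h : ∀ g ∈ G1, g ∈ Vspace G2 e) :
    (∀ i, e ≤ i → Vspace G1 i = Vspace G2 i) ∧
    max (lastFallDegree G1) e = max (lastFallDegree G2) e := by
  have hVeq : ∀ i, e ≤ i → Vspace G1 i = Vspace G2 i := by
    intro i hei
    refine le_antisymm ?_ (Vspace_mono_set hsub i)
    apply sInf_le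
    refine ⟨fun f hf => Vspace_totalDegree_le hf,
      fun g hg _ => Vspace_mono_deg G2 hei (h g hg),
      fun g hg h' hh' => mul_mem_Vspace hg h' hh'⟩
  refine ⟨hVeq, ?_⟩
  unfold lastFallDegree
  apply max_sSup_eq
  intro d hd
  have h1 : Vspace G1 d = Vspace G2 d := hVeq d hd.le
  have h2 : Vspace G1 (d - 1) = Vspace G2 (d - 1) := by
    apply hVeq
    omega
  simp only [Set.mem_setOf_eq, h1, h2]

end
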